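/- Let K be a field of characteristic 0 and u,v ∈ K[x,y]. Suppose p and q are one-variable polynomials over K such that deg(u+p(v)) ≥ deg u (the (ET2) step does not decrease the sum of degrees) and deg(u+p(v)) + deg(v+q(u+p(v))) < deg u + deg v (the subsequent (ET2') step makes the total decrease). Then there is a single elementary transformation among (ET1), (ET1'), (ET2), (ET2'), (ET3) taking (u,v) to a pair (u',v') with deg u' + deg v' < deg u + deg v. -/

import Mathlib

/-!
After the (ET2) step `u' = u + p(v)`, the pair `(u', w)` with `w = v + q(u')` has smaller degree
sum only if `deg w < deg v`, so `q(u')` cancels the top degree of `v` and `deg v = deg q · deg u'`.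
If `p` is constant, `q(u') = q(u + c)` and the single (ET2') step `(u, v) ↦ (u, w)` already
decreases the degree. Otherwise `deg p(v) ≥ deg v ≥ deg u'`, and since `deg u ≤ deg u'` the top
degree of `p(v)` cannot cancel against `u`; hence `deg u' = deg v` and `q = αX + β` is linear. Then
`u + p(v) + α⁻¹(v + β) = α⁻¹ w`, a single (ET2) step to `(α⁻¹ w, v)`.
-/

/-- The elementary transformations (ET1), (ET1'), (ET2), (ET2'), (ET3) on pairs of
polynomials in `K[x,y]`.  In (ET1)/(ET1') the quotient is specified by the equation
`quotient * denominator = numerator`, together with the divisibility condition. -/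
def ElemTrans {K : Type*} [Field K]
    (p p' : MvPolynomial (Fin 2) K × MvPolynomial (Fin 2) K) : Prop :=
  -- (ET1) : (u, v) ↦ ((u + a)/(c·v + b), v)
  (∃ a b c : K, MvPolynomial.C c * p.2 + MvPolynomial.C b ≠ 0 ∧
      (MvPolynomial.C c * p.2 + MvPolynomial.C b) ∣ (p.1 + MvPolynomial.C a) ∧
      p'.1 * (MvPolynomial.C c * p.2 + MvPolynomial.C b) = p.1 + MvPolynomial.C a ∧
      p'.2 = p.2) ∨
  -- (ET1') : (u, v) ↦ (u, (v + a)/(c·u + b))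
  (∃ a b c : K, MvPolynomial.C c * p.1 + MvPolynomial.C b ≠ 0 ∧
      (MvPolynomial.C c * p.1 + MvPolynomial.C b) ∣ (p.2 + MvPolynomial.C a) ∧
      p'.2 * (MvPolynomial.C c * p.1 + MvPolynomial.C b) = p.2 + MvPolynomial.C a ∧
      p'.1 = p.1) ∨
  -- (ET2) : (u, v) ↦ (u + q(v), v)
  (∃ q : Polynomial K, p' = (p.1 + Polynomial.aeval p.2 q, p.2)) ∨
  -- (ET2') : (u, v) ↦ (u, v + q(u))
  (∃ q : Polynomial K, p' = (p.1, p.2 + Polynomial.aeval p.1 q)) ∨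
  -- (ET3) : (u, v) ↦ (v, u)
  p' = (p.2, p.1)

namespace MvPolynomial

variable {R σ : Type*}

theorem totalDegree_eq_of_totalDegree_add_lt [CommRing R] {a b : MvPolynomial σ R}
    (h : (a + b).totalDegree < a.totalDegree) : b.totalDegree = a.totalDegree := by
  apply le_antisymm
  · calc b.totalDegree = (a + b + -a).totalDegree := by rw [add_neg_cancel_comm]
      _ ≤ max (a + b).totalDegree (-a).totalDegree := totalDegree_add _ _
      _ = a.totalDegree := by rw [totalDegree_neg]; omega
  · by_contra! hb
    have : a.totalDegree ≤ max (a + b).totalDegree (-b).totalDegree := by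
      simpa using totalDegree_add (a + b) (-b)
    rw [totalDegree_neg] at this
    omega

theorem totalDegree_aeval_le [CommSemiring R] (f : MvPolynomial σ R) (g : Polynomial R) :
    (Polynomial.aeval f g).totalDegree ≤ g.natDegree * f.totalDegree := by
  rw [Polynomial.aeval_eq_sum_range]
  refine totalDegree_finsetSum_le fun i hi => ?_
  refine (totalDegree_smul_le _ _).trans ((totalDegree_pow _ _).trans ?_)
  exact Nat.mul_le_mul_right _ (Nat.lt_succ_iff.mp (Finset.mem_range.mp hi))

section NoZeroDivisors

variable [CommSemiring R] [NoZeroDivisors R]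

theorem totalDegree_pow_of_isDomain (f : MvPolynomial σ R) (n : ℕ) :
    (f ^ n).totalDegree = n * f.totalDegree := by
  rcases eq_or_ne f 0 with rfl | hf
  · cases n <;> simp
  induction n with
  | zero => simp
  | succ n ih => rw [pow_succ, totalDegree_mul_of_isDomain (pow_ne_zero _ hf) hf, ih]; ring

theorem totalDegree_C_mul_of_ne_zero {a : R} (ha : a ≠ 0) (f : MvPolynomial σ R) :
    (C a * f).totalDegree = f.totalDegree := by
  rcases eq_or_ne f 0 with rfl | hf
  · simp
  · rw [totalDegree_mul_of_isDomain (C_ne_zero.mpr ha) hf, totalDegree_C, zero_add]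

theorem totalDegree_aeval_of_pos {f : MvPolynomial σ R} (hf : 0 < f.totalDegree)
    (g : Polynomial R) : (Polynomial.aeval f g).totalDegree = g.natDegree * f.totalDegree := by
  rcases Nat.eq_zero_or_pos g.natDegree with hg | hg
  · obtain ⟨c, rfl⟩ := Polynomial.natDegree_eq_zero.mp hg
    simp [algebraMap_eq]
  have hg0 : g ≠ 0 := by rintro rfl; simp at hg
  have hf0 : f ≠ 0 := by rintro rfl; simp at hf
  have hlead : (C g.leadingCoeff * f ^ g.natDegree).totalDegree = g.natDegree * f.totalDegree := by
    rw [totalDegree_C_mul_of_ne_zero (Polynomial.leadingCoeff_ne_zero.mpr hg0),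
      totalDegree_pow_of_isDomain]
  have htail : (Polynomial.aeval f g.eraseLead).totalDegree < g.natDegree * f.totalDegree :=
    calc (Polynomial.aeval f g.eraseLead).totalDegree ≤ g.eraseLead.natDegree * f.totalDegree :=
          totalDegree_aeval_le f _
      _ ≤ (g.natDegree - 1) * f.totalDegree :=
          Nat.mul_le_mul_right _ (Polynomial.eraseLead_natDegree_le g)
      _ < g.natDegree * f.totalDegree := Nat.mul_lt_mul_of_pos_right (by omega) hf
  conv_lhs => rw [← Polynomial.eraseLead_add_C_mul_X_pow g]
  rw [map_add, map_mul, map_pow, Polynomial.aeval_X, Polynomial.aeval_C, algebraMap_eq,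
    totalDegree_add_eq_right_of_totalDegree_lt (hlead ▸ htail), hlead]

end NoZeroDivisors

end MvPolynomial

open MvPolynomial

theorem add_aeval_add_C_inv_mul_X_add_C {K A : Type*} [Field K] [CommRing A] [Algebra K A]
    (u v : A) (p : Polynomial K) {α : K} (hα : α ≠ 0) (β : K) :
    u + Polynomial.aeval v (p + Polynomial.C α⁻¹ * (Polynomial.X + Polynomial.C β)) =
      algebraMap K A α⁻¹ *
        (v + Polynomial.aeval (u + Polynomial.aeval v p)
          (Polynomial.C α * Polynomial.X + Polynomial.C β)) := by
  have hαα : algebraMap K A α⁻¹ * algebraMap K A α = 1 := by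
    rw [← map_mul, inv_mul_cancel₀ hα, map_one]
  simp only [map_add, map_mul, Polynomial.aeval_C, Polynomial.aeval_X]
  linear_combination (-(u + Polynomial.aeval v p)) * hαα

theorem totalDegree_eq_and_natDegree_eq_one_of_peak {R σ : Type*} [CommRing R] [NoZeroDivisors R]
    {u v : MvPolynomial σ R} {p q : Polynomial R} (hp : 0 < p.natDegree)
    (h1 : u.totalDegree ≤ (u + Polynomial.aeval v p).totalDegree)
    (hw : (v + Polynomial.aeval (u + Polynomial.aeval v p) q).totalDegree < v.totalDegree) :
    (u + Polynomial.aeval v p).totalDegree = v.totalDegree ∧ q.natDegree = 1 := by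
  set u' := u + Polynomial.aeval v p
  set m := v.totalDegree
  have hm : 0 < m := by omega
  have hQ : (Polynomial.aeval u' q).totalDegree = m := totalDegree_eq_of_totalDegree_add_lt hw
  have hu' : 0 < u'.totalDegree := by
    by_contra! h
    have := totalDegree_aeval_le u' q
    rw [Nat.le_zero.mp h, mul_zero] at this
    omega
  have hmq : m = q.natDegree * u'.totalDegree := hQ ▸ totalDegree_aeval_of_pos hu' q
  have hq : 0 < q.natDegree := Nat.pos_of_ne_zero fun h => by rw [h, zero_mul] at hmq; omega
  have hP : (Polynomial.aeval v p).totalDegree = p.natDegree * m := totalDegree_aeval_of_pos hm p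
  have hle : u'.totalDegree ≤ m := hmq ▸ Nat.le_mul_of_pos_left _ hq
  have hge : (Polynomial.aeval v p).totalDegree ≤ u'.totalDegree := by
    by_contra! hlt
    have hu : u.totalDegree = (Polynomial.aeval v p).totalDegree :=
      totalDegree_eq_of_totalDegree_add_lt (by rwa [add_comm])
    omega
  have hmP : m ≤ (Polynomial.aeval v p).totalDegree := hP ▸ Nat.le_mul_of_pos_left m hp
  have hu'm : u'.totalDegree = m := le_antisymm hle (hmP.trans hge)
  refine ⟨hu'm, ?_⟩
  rw [hu'm] at hmq
  exact (Nat.eq_of_mul_eq_mul_right hm (by rw [one_mul, ← hmq])).symm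

theorem et2_et2'_peak_reduction_general {K : Type*} [Field K]
    (u v : MvPolynomial (Fin 2) K) (p q : Polynomial K)
    (h1 : u.totalDegree ≤ (u + Polynomial.aeval v p).totalDegree)
    (h2 : (u + Polynomial.aeval v p).totalDegree +
        (v + Polynomial.aeval (u + Polynomial.aeval v p) q).totalDegree <
      u.totalDegree + v.totalDegree) :
    ∃ p' : MvPolynomial (Fin 2) K × MvPolynomial (Fin 2) K,
      ElemTrans (u, v) p' ∧
      p'.1.totalDegree + p'.2.totalDegree < u.totalDegree + v.totalDegree := by
  set w := v + Polynomial.aeval (u + Polynomial.aeval v p) q with hw_def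
  have hw : w.totalDegree < v.totalDegree := by omega
  rcases Nat.eq_zero_or_pos p.natDegree with hp | hp
  · obtain ⟨c, rfl⟩ := Polynomial.natDegree_eq_zero.mp hp
    refine ⟨(u, w), Or.inr <| Or.inr <| Or.inr <| Or.inl
      ⟨q.comp (Polynomial.X + Polynomial.C c), ?_⟩, by dsimp only; omega⟩
    simp [hw_def, Polynomial.aeval_comp]
  obtain ⟨hu', hq⟩ := totalDegree_eq_and_natDegree_eq_one_of_peak hp h1 hw
  obtain ⟨α, β, hα, rfl⟩ :
      ∃ α β : K, α ≠ 0 ∧ q = Polynomial.C α * Polynomial.X + Polynomial.C β :=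
    ⟨q.coeff 1, q.coeff 0, hq ▸ Polynomial.leadingCoeff_ne_zero.mpr (by rintro rfl; simp at hq),
      Polynomial.eq_X_add_C_of_natDegree_le_one hq.le⟩
  refine ⟨(C α⁻¹ * w, v), Or.inr <| Or.inr <| Or.inl
    ⟨p + Polynomial.C α⁻¹ * (Polynomial.X + Polynomial.C β), ?_⟩, ?_⟩
  · rw [hw_def, ← algebraMap_eq, add_aeval_add_C_inv_mul_X_add_C u v p hα]
  · dsimp only
    rw [totalDegree_C_mul_of_ne_zero (inv_ne_zero hα)]
    omega

/-- **reduction of an (ET2)–(ET2') peak.** If applying (ET2) with `p` to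
`(u, v)` does not decrease the sum of degrees, but the subsequent (ET2') with `q`
makes the total sum of degrees decrease, then a single elementary transformation already
decreases the sum of degrees of `(u, v)`. -/
theorem et2_et2'_peak_reduction {K : Type*} [Field K] [CharZero K]
    (u v : MvPolynomial (Fin 2) K) (p q : Polynomial K)
    (h1 : u.totalDegree ≤ (u + Polynomial.aeval v p).totalDegree)
    (h2 : (u + Polynomial.aeval v p).totalDegree +
        (v + Polynomial.aeval (u + Polynomial.aeval v p) q).totalDegree <
      u.totalDegree + v.totalDegree) :
    ∃ p' : MvPolynomial (Fin 2) K × MvPolynomial (Fin 2) K,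
      ElemTrans (u, v) p' ∧
      p'.1.totalDegree + p'.2.totalDegree < u.totalDegree + v.totalDegree :=
  et2_et2'_peak_reduction_general u v p q h1 h2
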